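/- Let R(τ, z) = ∑_{r ∈ Z + 1/2} ( sgn(r) - E(√(2y)·(r + v/y)) ) · (-1)^{r - 1/2} q^{-r²/2} ζ^{-r}, where E(x) = 2∫₀ˣ e^{-πt²}dt is the error-function and τ = x + iy ∈ H, z = u + iv ∈ C. Then the series converges absolutely for all (τ, z) ∈ H × C. -/

import Mathlib

/-!
Write `r = n + 1/2` and `X = √(2y) (r + v/y)`. Since `(s + x)² ≥ s² + x²` for `s, x ≥ 0`, the
Gaussian tail gives `|sgn X - E(X)| ≤ exp(-π X²)` for every real `X`. For all but finitely many
`n` the signs of `r` and `X` agree, and then `X² = 2(y r² + 2 r v) + 2v²/y` bounds the `n`-th term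
by `exp(-π y r² - 2π r v)`, which up to a constant factor is the norm of the Jacobi theta term
of index `n` at `(z + τ/2, τ)`; these are summable for `τ` in the upper half-plane.
-/

open Real MeasureTheory Set Filter

/-- The error function `E(x) = 2∫₀ˣ e^{-πt²} dt`. -/
noncomputable def errFn (x : ℝ) : ℝ := 2 * ∫ t in (0:ℝ)..x, Real.exp (-Real.pi * t ^ 2)

theorem setIntegral_Ioi_gaussian_le {b x : ℝ} (hb : 0 < b) (hx : 0 ≤ x) :
    ∫ t in Ioi x, exp (-b * t ^ 2) ≤ exp (-b * x ^ 2) * (√(π / b) / 2) := by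
  have hshift : ∫ t in Ioi x, exp (-b * t ^ 2) = ∫ s in Ioi 0, exp (-b * (s + x) ^ 2) := by
    simpa only [preimage_add_const_Ioi, sub_self] using
      ((measurePreserving_add_right volume x).setIntegral_preimage_emb
        (measurableEmbedding_addRight x) (fun t => exp (-b * t ^ 2)) (Ioi x)).symm
  rw [hshift, ← integral_gaussian_Ioi, ← integral_const_mul]
  refine setIntegral_mono_on ((integrable_exp_neg_mul_sq hb).comp_add_right x).integrableOn
    ((integrable_exp_neg_mul_sq hb).const_mul _).integrableOn measurableSet_Ioi fun s hs => ?_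
  rw [← exp_add, exp_le_exp]
  nlinarith [mul_nonneg (le_of_lt (mem_Ioi.mp hs)) hx]

theorem errFn_neg (x : ℝ) : errFn (-x) = -errFn x := by
  have h := intervalIntegral.integral_comp_neg (a := 0) (b := x) (fun t => exp (-π * t ^ 2))
  simp only [neg_sq, neg_zero] at h
  rw [errFn, errFn, intervalIntegral.integral_symm, ← h]
  ring

theorem one_sub_errFn_eq {x : ℝ} (hx : 0 ≤ x) :
    1 - errFn x = 2 * ∫ t in Ioi x, exp (-π * t ^ 2) := by
  have hhalf : ∫ t in Ioi 0, exp (-π * t ^ 2) = 1 / 2 := by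
    rw [integral_gaussian_Ioi, div_self pi_ne_zero, sqrt_one]
  have hint := (integrable_exp_neg_mul_sq pi_pos).integrableOn (s := Ioc 0 x)
  rw [← Ioc_union_Ioi_eq_Ioi hx, setIntegral_union Ioc_disjoint_Ioi_same measurableSet_Ioi
    hint (integrable_exp_neg_mul_sq pi_pos).integrableOn,
    ← intervalIntegral.integral_of_le hx] at hhalf
  rw [errFn]
  linarith

theorem one_sub_errFn_mem_Icc {x : ℝ} (hx : 0 ≤ x) :
    1 - errFn x ∈ Icc 0 (exp (-π * x ^ 2)) := by
  have hle := setIntegral_Ioi_gaussian_le pi_pos hx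
  rw [div_self pi_ne_zero, sqrt_one] at hle
  rw [one_sub_errFn_eq hx]
  exact ⟨by positivity, by linarith⟩

theorem abs_sign_sub_errFn_le (x : ℝ) : |Real.sign x - errFn x| ≤ exp (-π * x ^ 2) := by
  rcases lt_trichotomy x 0 with hx | rfl | hx
  · obtain ⟨h0, h1⟩ := one_sub_errFn_mem_Icc (neg_nonneg.mpr hx.le)
    rw [errFn_neg] at h0 h1
    rw [neg_sq] at h1
    rw [Real.sign_of_neg hx, abs_le]
    constructor <;> linarith
  · simp [errFn]
  · obtain ⟨h0, h1⟩ := one_sub_errFn_mem_Icc hx.le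
    rw [Real.sign_of_pos hx, abs_of_nonneg h0]
    exact h1

namespace Real

theorem sign_mul_of_pos {c r : ℝ} (hc : 0 < c) : sign (c * r) = sign r := by
  rcases lt_trichotomy r 0 with hr | rfl | hr
  · rw [sign_of_neg hr, sign_of_neg (mul_neg_of_pos_of_neg hc hr)]
  · rw [mul_zero]
  · rw [sign_of_pos hr, sign_of_pos (mul_pos hc hr)]

theorem sign_add_of_abs_lt {a b : ℝ} (h : |b| < |a|) : sign (a + b) = sign a := by
  rcases lt_trichotomy a 0 with ha | rfl | ha
  · rw [abs_of_neg ha] at h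
    rw [sign_of_neg ha, sign_of_neg (by linarith [le_abs_self b])]
  · rw [abs_zero] at h
    exact absurd h (abs_nonneg b).not_gt
  · rw [abs_of_pos ha] at h
    rw [sign_of_pos ha, sign_of_pos (by linarith [neg_abs_le b])]

end Real

theorem eventually_lt_abs_add_half (c : ℝ) : ∀ᶠ n : ℤ in cofinite, c < |(n : ℝ) + 1 / 2| := by
  filter_upwards [(tendsto_norm_cocompact_atTop.comp Int.tendsto_coe_cofinite).eventually_gt_atTop
    (c + 1 / 2)] with n hn
  simp only [Function.comp_apply, Real.norm_eq_abs] at hn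
  have h := abs_sub_abs_le_abs_add (n : ℝ) (1 / 2)
  rw [abs_of_pos (by norm_num : (0:ℝ) < 1 / 2)] at h
  linarith

theorem sign_sub_errFn_mul_exp_le {y v r : ℝ} (hy : 0 < y) (hr : |v| / y < |r|) :
    |Real.sign r - errFn (√(2 * y) * (r + v / y))| * exp (π * y * r ^ 2 + 2 * π * r * v)
      ≤ exp (-π * y * r ^ 2 - 2 * π * r * v) := by
  set X := √(2 * y) * (r + v / y) with hX
  have hsign : Real.sign r = Real.sign X := by
    rw [hX, Real.sign_mul_of_pos (by positivity), Real.sign_add_of_abs_lt]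
    rwa [abs_div, abs_of_pos hy]
  have hX2 : X ^ 2 = 2 * (y * r ^ 2 + 2 * r * v) + 2 * v ^ 2 / y := by
    rw [hX, mul_pow, sq_sqrt (by positivity)]
    field_simp
    ring
  calc |Real.sign r - errFn X| * exp (π * y * r ^ 2 + 2 * π * r * v)
      ≤ exp (-π * X ^ 2) * exp (π * y * r ^ 2 + 2 * π * r * v) := by
        gcongr
        rw [hsign]
        exact abs_sign_sub_errFn_le X
    _ ≤ exp (-π * y * r ^ 2 - 2 * π * r * v) := by
        rw [← exp_add, exp_le_exp, hX2]
        have : 0 ≤ π * (2 * v ^ 2 / y) := by positivity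
        nlinarith

theorem norm_cexp_neg_theta_exponent (τ z : ℂ) (r : ℝ) :
    ‖Complex.exp (2 * π * Complex.I * (-(τ * r ^ 2 / 2) - r * z))‖
      = exp (π * τ.im * r ^ 2 + 2 * π * r * z.im) := by
  rw [Complex.norm_exp]
  congr 1
  simp only [pow_two, Complex.mul_re, Complex.re_ofNat, Complex.ofReal_re, Complex.im_ofNat,
    Complex.ofReal_im, mul_zero, sub_zero, Complex.I_re, Complex.mul_im, zero_mul, add_zero,
    Complex.I_im, mul_one, sub_self, Complex.sub_re, Complex.neg_re, Complex.div_ofNat_re,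
    Complex.sub_im, Complex.neg_im, Complex.div_ofNat_im, zero_add, zero_sub]
  ring

theorem norm_jacobiTheta₂_term_add_half (n : ℤ) (z τ : ℂ) :
    ‖jacobiTheta₂_term n (z + τ / 2) τ‖ * exp (-π * (τ.im / 4 + z.im))
      = exp (-π * τ.im * (n + 1 / 2) ^ 2 - 2 * π * (n + 1 / 2) * z.im) := by
  rw [norm_jacobiTheta₂_term, ← exp_add]
  congr 1
  simp only [neg_mul, Complex.add_im, Complex.div_ofNat_im, one_div]
  ring

/-- Zwegers's nonholomorphic `R`-series
`R(τ, z) = ∑_{r ∈ ℤ + 1/2} (sgn(r) - E(√(2y)(r + v/y))) (-1)^{r-1/2} q^{-r²/2} ζ^{-r}`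
converges absolutely for all `(τ, z) ∈ H × ℂ`. -/
theorem R_series_summable :
    ∀ τ z : ℂ, 0 < τ.im →
      Summable (fun n : ℤ => Norm.norm (
        (((Real.sign ((n : ℝ) + 1 / 2)
            - errFn (Real.sqrt (2 * τ.im) * (((n : ℝ) + 1 / 2) + z.im / τ.im))) : ℝ) : ℂ)
        * (-1 : ℂ) ^ n
        * Complex.exp (2 * (Real.pi : ℂ) * Complex.I *
            (-(τ * ((n : ℂ) + 1 / 2) ^ 2 / 2) - ((n : ℂ) + 1 / 2) * z)))) := by
  intro τ z hy
  have hθ := ((summable_jacobiTheta₂_term_iff (z + τ / 2) τ).mpr hy).norm.mul_right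
    (exp (-π * (τ.im / 4 + z.im)))
  refine hθ.of_norm_bounded_eventually ?_
  filter_upwards [eventually_lt_abs_add_half (|z.im| / τ.im)] with n hn
  have hcast : (n : ℂ) + 1 / 2 = (((n : ℝ) + 1 / 2 : ℝ) : ℂ) := by push_cast; rfl
  rw [norm_norm, norm_mul, norm_mul, Complex.norm_real, Real.norm_eq_abs, norm_zpow, norm_neg,
    norm_one, one_zpow, mul_one, hcast, norm_cexp_neg_theta_exponent,
    norm_jacobiTheta₂_term_add_half]
  exact sign_sub_errFn_mul_exp_le hy hn
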